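/- Let d ≥ 1 and let Y, Z : ℝ² → ℝ^d be C¹ functions of (t,s). Define q = Y·Z and h = √(1 + |Y|² + |Z|² + q²). If Y and Z satisfy ∂ₜY + ∂ₛ((Z + qY)/h) = 0 and ∂ₜZ + ∂ₛ((Y + qZ)/h) = 0 on ℝ², then ∂ₜq + ∂ₛ((q² − 1)/h) = 0 on ℝ². -/

import Mathlib

open scoped RealInnerProductSpace

/-- Partial derivative in the first variable `t` of a map on `ℝ × ℝ`. -/
noncomputable def pt {F : Type*} [NormedAddCommGroup F] [NormedSpace ℝ F]
    (X : ℝ × ℝ → F) (p : ℝ × ℝ) : F := deriv (fun t => X (t, p.2)) p.1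

/-- Partial derivative in the second variable `s` of a map on `ℝ × ℝ`. -/
noncomputable def ps {F : Type*} [NormedAddCommGroup F] [NormedSpace ℝ F]
    (X : ℝ × ℝ → F) (p : ℝ × ℝ) : F := deriv (fun s => X (p.1, s)) p.2

/-- `q = Y·Z`. -/
noncomputable def qf {d : ℕ} (Y Z : ℝ × ℝ → EuclideanSpace ℝ (Fin d)) (p : ℝ × ℝ) : ℝ :=
  ⟪Y p, Z p⟫

/-- `h = √(1 + |Y|² + |Z|² + q²)`. -/
noncomputable def hf {d : ℕ} (Y Z : ℝ × ℝ → EuclideanSpace ℝ (Fin d)) (p : ℝ × ℝ) : ℝ :=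
  Real.sqrt (1 + ‖Y p‖ ^ 2 + ‖Z p‖ ^ 2 + qf Y Z p ^ 2)

/-!
Write `A = (Z + qY)/h` and `B = (Y + qZ)/h`. Then `∂ₜq = Y·∂ₜZ + ∂ₜY·Z = -(Y·∂ₛB + Z·∂ₛA)`,
so everything happens in the single variable `s`. There, `Y·B + Z·A = h + (q² - 1)/h`
because `h² = 1 + |Y|² + |Z|² + q²`, and `∂ₛY·B + ∂ₛZ·A = (Y·∂ₛY + Z·∂ₛZ + q ∂ₛq)/h = ∂ₛh`.
Differentiating `Y·B + Z·A` with the product rule therefore leaves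
`Y·∂ₛB + Z·∂ₛA = ∂ₛ((q² - 1)/h)`.
-/

section StringFlux

variable {E : Type*} [NormedAddCommGroup E] [InnerProductSpace ℝ E]

-- `hf Y Z p` is definitionally `hFactor (Y p) (Z p)`, which lets the lemmas below apply to `hf`.
noncomputable def hFactor (y z : E) : ℝ :=
  √(1 + ‖y‖ ^ 2 + ‖z‖ ^ 2 + ⟪y, z⟫ ^ 2)

lemma one_add_norm_sq_add_norm_sq_add_inner_sq_pos (y z : E) :
    0 < 1 + ‖y‖ ^ 2 + ‖z‖ ^ 2 + ⟪y, z⟫ ^ 2 := by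
  positivity

lemma hFactor_pos (y z : E) : 0 < hFactor y z :=
  Real.sqrt_pos.mpr (one_add_norm_sq_add_norm_sq_add_inner_sq_pos y z)

lemma hFactor_sq (y z : E) : hFactor y z ^ 2 = 1 + ‖y‖ ^ 2 + ‖z‖ ^ 2 + ⟪y, z⟫ ^ 2 :=
  Real.sq_sqrt (one_add_norm_sq_add_norm_sq_add_inner_sq_pos y z).le

lemma inner_add_inner_flux_self (y z : E) :
    ⟪y, (hFactor y z)⁻¹ • (y + ⟪y, z⟫ • z)⟫ + ⟪z, (hFactor y z)⁻¹ • (z + ⟪y, z⟫ • y)⟫ =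
      hFactor y z + (⟪y, z⟫ ^ 2 - 1) / hFactor y z := by
  have hh := (hFactor_pos y z).ne'
  simp only [real_inner_smul_right, inner_add_right,
    real_inner_self_eq_norm_sq, real_inner_comm y z]
  field_simp
  linear_combination -hFactor_sq y z

lemma inner_add_inner_flux (y z y' z' : E) :
    ⟪y', (hFactor y z)⁻¹ • (y + ⟪y, z⟫ • z)⟫ + ⟪z', (hFactor y z)⁻¹ • (z + ⟪y, z⟫ • y)⟫ =
      (⟪y, y'⟫ + ⟪z, z'⟫ + ⟪y, z⟫ * (⟪y, z'⟫ + ⟪y', z⟫)) / hFactor y z := by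
  simp only [real_inner_smul_right, inner_add_right]
  rw [real_inner_comm y y', real_inner_comm z z', real_inner_comm y z']
  ring

variable {y z : ℝ → E} {y' z' : E} {s : ℝ}

lemma HasDerivAt.hFactor (hy : HasDerivAt y y' s) (hz : HasDerivAt z z' s) :
    HasDerivAt (fun u => hFactor (y u) (z u))
      ((⟪y s, y'⟫ + ⟪z s, z'⟫ + ⟪y s, z s⟫ * (⟪y s, z'⟫ + ⟪y', z s⟫)) / hFactor (y s) (z s)) s := by
  have hsum : HasDerivAt (fun u => 1 + ‖y u‖ ^ 2 + ‖z u‖ ^ 2 + ⟪y u, z u⟫ ^ 2)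
      (2 * (⟪y s, y'⟫ + ⟪z s, z'⟫ + ⟪y s, z s⟫ * (⟪y s, z'⟫ + ⟪y', z s⟫))) s := by
    refine ((((hy.norm_sq).const_add 1).add hz.norm_sq).add ((hy.inner ℝ hz).pow 2)).congr_deriv ?_
    norm_num
    ring
  exact (hsum.sqrt (one_add_norm_sq_add_norm_sq_add_inner_sq_pos (y s) (z s)).ne').congr_deriv
    (mul_div_mul_left _ _ two_ne_zero)

lemma inner_deriv_flux_add_inner_deriv_flux (hy : DifferentiableAt ℝ y s)
    (hz : DifferentiableAt ℝ z s) :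
    ⟪y s, deriv (fun u => (hFactor (y u) (z u))⁻¹ • (y u + ⟪y u, z u⟫ • z u)) s⟫ +
        ⟪z s, deriv (fun u => (hFactor (y u) (z u))⁻¹ • (z u + ⟪y u, z u⟫ • y u)) s⟫ =
      deriv (fun u => (⟪y u, z u⟫ ^ 2 - 1) / hFactor (y u) (z u)) s := by
  set b := fun u => (hFactor (y u) (z u))⁻¹ • (y u + ⟪y u, z u⟫ • z u)
  set a := fun u => (hFactor (y u) (z u))⁻¹ • (z u + ⟪y u, z u⟫ • y u)
  have hh := hy.hasDerivAt.hFactor hz.hasDerivAt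
  have hq := hy.inner ℝ hz
  have hb : DifferentiableAt ℝ b s :=
    (hh.differentiableAt.inv (hFactor_pos _ _).ne').smul (hy.add (hq.smul hz))
  have ha : DifferentiableAt ℝ a s :=
    (hh.differentiableAt.inv (hFactor_pos _ _).ne').smul (hz.add (hq.smul hy))
  have hprod : HasDerivAt (fun u => (⟪y u, b u⟫ + ⟪z u, a u⟫) - hFactor (y u) (z u))
      (⟪y s, deriv b s⟫ + ⟪deriv y s, b s⟫ + (⟪z s, deriv a s⟫ + ⟪deriv z s, a s⟫) -
        (⟪y s, deriv y s⟫ + ⟪z s, deriv z s⟫ + ⟪y s, z s⟫ * (⟪y s, deriv z s⟫ + ⟪deriv y s, z s⟫)) /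
          hFactor (y s) (z s)) s :=
    ((hy.hasDerivAt.inner ℝ hb.hasDerivAt).add (hz.hasDerivAt.inner ℝ ha.hasDerivAt)).sub hh
  have hflux : (fun u => (⟪y u, z u⟫ ^ 2 - 1) / hFactor (y u) (z u)) =
      fun u => (⟪y u, b u⟫ + ⟪z u, a u⟫) - hFactor (y u) (z u) := by
    funext u
    rw [inner_add_inner_flux_self]
    ring
  rw [hflux, hprod.deriv, ← inner_add_inner_flux]
  ring

end StringFlux

theorem statement9_general (d : ℕ)
    (Y Z : ℝ × ℝ → EuclideanSpace ℝ (Fin d))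
    (hY : ContDiff ℝ 1 Y) (hZ : ContDiff ℝ 1 Z)
    (heq1 : ∀ p : ℝ × ℝ,
      pt Y p + ps (fun q => (hf Y Z q)⁻¹ • (Z q + qf Y Z q • Y q)) p = 0)
    (heq2 : ∀ p : ℝ × ℝ,
      pt Z p + ps (fun q => (hf Y Z q)⁻¹ • (Y q + qf Y Z q • Z q)) p = 0) :
    ∀ p : ℝ × ℝ, pt (qf Y Z) p + ps (fun q => (qf Y Z q ^ 2 - 1) / hf Y Z q) p = 0 := by
  have hYd : Differentiable ℝ Y := hY.differentiable one_ne_zero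
  have hZd : Differentiable ℝ Z := hZ.differentiable one_ne_zero
  rintro ⟨t, s⟩
  have hq : pt (qf Y Z) (t, s) = ⟪Y (t, s), pt Z (t, s)⟫ + ⟪pt Y (t, s), Z (t, s)⟫ := by
    have hYt : DifferentiableAt ℝ (fun u => Y (u, s)) t := by fun_prop
    have hZt : DifferentiableAt ℝ (fun u => Z (u, s)) t := by fun_prop
    exact (hYt.hasDerivAt.inner ℝ hZt.hasDerivAt).deriv
  have hflux : ⟪Y (t, s), ps (fun q => (hf Y Z q)⁻¹ • (Y q + qf Y Z q • Z q)) (t, s)⟫ +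
      ⟪Z (t, s), ps (fun q => (hf Y Z q)⁻¹ • (Z q + qf Y Z q • Y q)) (t, s)⟫ =
      ps (fun q => (qf Y Z q ^ 2 - 1) / hf Y Z q) (t, s) :=
    inner_deriv_flux_add_inner_deriv_flux (y := fun u => Y (t, u)) (z := fun u => Z (t, u))
      (by fun_prop) (by fun_prop)
  rw [hq, eq_neg_of_add_eq_zero_left (heq1 _), eq_neg_of_add_eq_zero_left (heq2 _),
    inner_neg_right, inner_neg_left, real_inner_comm (Z (t, s))]
  linear_combination -hflux

/-- The additional conservation law `∂ₜq + ∂ₛ((q² - 1)/h) = 0` holds for every `C¹` solution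
of the relativistic string equation in conservative form. -/
theorem statement9 (d : ℕ) (hd : 1 ≤ d)
    (Y Z : ℝ × ℝ → EuclideanSpace ℝ (Fin d))
    (hY : ContDiff ℝ 1 Y) (hZ : ContDiff ℝ 1 Z)
    (heq1 : ∀ p : ℝ × ℝ,
      pt Y p + ps (fun q => (hf Y Z q)⁻¹ • (Z q + qf Y Z q • Y q)) p = 0)
    (heq2 : ∀ p : ℝ × ℝ,
      pt Z p + ps (fun q => (hf Y Z q)⁻¹ • (Y q + qf Y Z q • Z q)) p = 0) :
    ∀ p : ℝ × ℝ, pt (qf Y Z) p + ps (fun q => (qf Y Z q ^ 2 - 1) / hf Y Z q) p = 0 :=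
  statement9_general d Y Z hY hZ heq1 heq2
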